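/- For every x ∈ V(ℤ), the Γ-orbit of x contains only finitely many last vertices, i.e., the set {y ∈ Γ·x : Δ(𝒱ᵢ(y)) ≥ Δ(y) for all i ∈ {1,2,3}} is finite. -/
import Mathlib


/-- The Vieta involution in coordinate `i`:
`x ↦ Function.update x i (αᵢ − xⱼxₗ − xᵢ)` where `j = i+1`, `l = i+2` (mod 3). -/
def vAct (α : Fin 3 → ℤ) (i : Fin 3) (x : Fin 3 → ℤ) : Fin 3 → ℤ :=
  Function.update x i (α i - x (i + 1) * x (i + 2) - x i)

/-- Membership in the integral cubic surface `V(ℤ)`. -/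
def onV (α : Fin 3 → ℤ) (β : ℤ) (x : Fin 3 → ℤ) : Prop :=
  x 0 ^ 2 + x 1 ^ 2 + x 2 ^ 2 + x 0 * x 1 * x 2
    - α 0 * x 0 - α 1 * x 1 - α 2 * x 2 - β = 0

/-- The height function `Δ(x) = |x₁| + |x₂| + |x₃|`. -/
def delta (x : Fin 3 → ℤ) : ℤ := |x 0| + |x 1| + |x 2|

/-- Membership in the finite exceptional set `𝔗`. -/
def inT (α : Fin 3 → ℤ) (β : ℤ) (x : Fin 3 → ℤ) : Prop :=
  onV α β x ∧ ∃ σ : Equiv.Perm (Fin 3),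
    |x (σ 0)| ≤ 1 ∨ |x (σ 1) * x (σ 2)| ≤ max (3 * |α (σ 0)|) 4

/-- Membership in the exceptional set `𝔘`. -/
def inU (α : Fin 3 → ℤ) (β : ℤ) (x : Fin 3 → ℤ) : Prop :=
  onV α β x ∧ ¬ inT α β x ∧ ∃ σ : Equiv.Perm (Fin 3),
    |x (σ 0)| = 2 ∧ delta (vAct α (σ 1) x) ≤ delta x ∧
      delta (vAct α (σ 2) x) ≤ delta x

/-- `y` lies in the `Γ`-orbit of `x`: it is obtained from `x` by a finite
sequence of Vieta involutions. -/
def gammaRel (α : Fin 3 → ℤ) (x y : Fin 3 → ℤ) : Prop :=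
  ∃ L : List (Fin 3), y = L.foldl (fun z i => vAct α i z) x

/-- `y` lies in the `Γ₀`-orbit (mapping class group orbit) of `x`: it is
obtained from `x` by an even-length sequence of Vieta involutions. -/
def gamma0Rel (α : Fin 3 → ℤ) (x y : Fin 3 → ℤ) : Prop :=
  ∃ L : List (Fin 3), L.length % 2 = 0 ∧ y = L.foldl (fun z i => vAct α i z) x

/-- `y` is a descendent of `x`: obtained by a finite sequence of Vieta
involutions along which `Δ` is non-increasing at every step. -/
def descendent (α : Fin 3 → ℤ) (x y : Fin 3 → ℤ) : Prop :=
  ∃ L : List (Fin 3), y = L.foldl (fun z i => vAct α i z) x ∧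
    ∀ t < L.length,
      delta ((L.take (t + 1)).foldl (fun z i => vAct α i z) x) ≤
        delta ((L.take t).foldl (fun z i => vAct α i z) x)

/-- Membership in `𝔗' = {𝒱ᵢ(x), 𝒱ⱼ𝒱ᵢ(x) : x ∈ 𝔗}`. -/
def inT' (α : Fin 3 → ℤ) (β : ℤ) (x : Fin 3 → ℤ) : Prop :=
  ∃ y, inT α β y ∧
    ((∃ i, x = vAct α i y) ∨ ∃ i j, x = vAct α j (vAct α i y))

/-- Membership in `𝔘' = {𝒱ᵢ(x), 𝒱ⱼ𝒱ᵢ(x) : x ∈ 𝔘}`. -/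
def inU' (α : Fin 3 → ℤ) (β : ℤ) (x : Fin 3 → ℤ) : Prop :=
  ∃ y, inU α β y ∧
    ((∃ i, x = vAct α i y) ∨ ∃ i j, x = vAct α j (vAct α i y))

set_option maxHeartbeats 2000000


lemma quad_bound (S p q : ℤ) (hS : 0 ≤ S) (hp : 0 ≤ p) (hq : 0 ≤ q)
    (h : S^2 ≤ p*S + q) : S ≤ p + q := by
  by_contra hc
  push_neg at hc
  have h1 : p + q + 1 ≤ S := by linarith
  nlinarith [mul_le_mul_of_nonneg_left h1 hS, mul_nonneg hq (show (0:ℤ) ≤ S - 1 by linarith)]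

lemma mul_le_A {a A : ℤ} (x : ℤ) (h : |a| ≤ A) : a * x ≤ A * |x| :=
  le_trans (le_abs_self _) (by rw [abs_mul]; exact mul_le_mul_of_nonneg_right h (abs_nonneg x))

lemma core_int2 (A B0 a1 a2 a3 b x1 x2 x3 e : ℤ)
    (hA1 : |a1| ≤ A) (hA2 : |a2| ≤ A) (hA3 : |a3| ≤ A) (hB : |b| ≤ B0)
    (he : e = 1 ∨ e = -1) (hx3 : x3 = 2*e)
    (heq : x1^2 + x2^2 + x3^2 + x1*x2*x3 - a1*x1 - a2*x2 - a3*x3 - b = 0)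
    (h1 : |a1 - x2*x3 - x1| ≤ |x1|) (h2 : |a2 - x1*x3 - x2| ≤ |x2|)
    (hn1 : a1 - x2*x3 - x1 ≠ x1) (hn2 : a2 - x1*x3 - x2 ≠ x2) :
    |x1| + |x2| + |x3| ≤ 10*(A + B0 + 3)^2 := by
  have hA0 : 0 ≤ A := le_trans (abs_nonneg _) hA1
  have hB0 : 0 ≤ B0 := le_trans (abs_nonneg _) hB
  subst hx3
  have hee : e * e = 1 := by rcases he with rfl | rfl <;> norm_num
  have habse : |e| = 1 := by rcases he with rfl | rfl <;> norm_num
  obtain ⟨s, hsdef⟩ : ∃ t, t = x1 + e*x2 := ⟨_, rfl⟩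
  obtain ⟨d, hddef⟩ : ∃ t, t = a1 - e*a2 := ⟨_, rfl⟩
  obtain ⟨δ1, hδ1def⟩ : ∃ t, t = 2*s - a1 := ⟨_, rfl⟩
  obtain ⟨δ2, hδ2def⟩ : ∃ t, t = 2*s - e*a2 := ⟨_, rfl⟩
  have hx3abs : |2*e| = 2 := by rw [abs_mul, habse]; norm_num
  have key : d*x1 = s^2 - (e*a2)*s - (b + 2*e*a3 - 4) := by
    rw [hddef, hsdef]
    linear_combination (-1) * heq + (-(x2^2 - a2*x2 - 4)) * hee
  have hrew1 : a1 - x2*(2*e) - x1 = x1 - δ1 := by rw [hδ1def, hsdef]; ring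
  have hrew2 : a2 - x1*(2*e) - x2 = e*((s - x1) - δ2) := by
    rw [hδ2def, hsdef]; linear_combination (x2 - a2) * hee
  have h1' : |x1 - δ1| ≤ |x1| := by rwa [hrew1] at h1
  have h2' : |(s - x1) - δ2| ≤ |s - x1| := by
    rw [hrew2, abs_mul, habse, one_mul] at h2
    have hex2 : |x2| = |s - x1| := by
      rw [hsdef]; rw [show x1 + e*x2 - x1 = e * x2 by ring, abs_mul, habse, one_mul]
    rwa [hex2] at h2
  have sq1 : (x1 - δ1)*(x1 - δ1) ≤ x1*x1 := by
    have h := mul_self_le_mul_self (abs_nonneg (x1 - δ1)) h1'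
    rwa [abs_mul_abs_self, abs_mul_abs_self] at h
  have q1 : 0 ≤ δ1 * (2*x1 - δ1) := by nlinarith [sq1]
  have sq2 : ((s - x1) - δ2)*((s - x1) - δ2) ≤ (s - x1)*(s - x1) := by
    have h := mul_self_le_mul_self (abs_nonneg ((s - x1) - δ2)) h2'
    rwa [abs_mul_abs_self, abs_mul_abs_self] at h
  have q2 : 0 ≤ δ2 * (2*(s - x1) - δ2) := by nlinarith [sq2]
  have hd1 : δ1 ≠ 0 := by
    intro h0
    apply hn1
    rw [hrew1, h0]; ring
  have hd2 : δ2 ≠ 0 := by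
    intro h0
    apply hn2
    rw [hrew2, h0]
    linear_combination x2 * hee + e * hsdef
  have hea2 : |e*a2| ≤ A := by rw [abs_mul, habse, one_mul]; exact hA2
  have hea3 : |e*a3| ≤ A := by rw [abs_mul, habse, one_mul]; exact hA3
  -- |s| ≤ A
  have hs : |s| ≤ A := by
    by_contra hc
    push_neg at hc
    rcases lt_abs.mp hc with hpos | hneg
    · have hs1 : A + 1 ≤ s := hpos
      have hδ1pos : 0 < δ1 := by
        have := (abs_le.mp hA1).2
        rw [hδ1def]; linarith
      have hδ2pos : 0 < δ2 := by
        have := (abs_le.mp hea2).2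
        rw [hδ2def]; linarith
      have k1 : 0 ≤ 2*x1 - δ1 := by
        by_contra hk; push_neg at hk
        have := mul_neg_of_pos_of_neg hδ1pos hk
        linarith
      have k2 : 0 ≤ 2*(s - x1) - δ2 := by
        by_contra hk; push_neg at hk
        have := mul_neg_of_pos_of_neg hδ2pos hk
        linarith
      have := (abs_le.mp hA1).2
      have := (abs_le.mp hea2).2
      rw [hδ1def] at k1
      rw [hδ2def] at k2
      linarith
    · have hs1 : s ≤ -(A + 1) := by linarith
      have hδ1neg : δ1 < 0 := by
        have := (abs_le.mp hA1).1
        rw [hδ1def]; linarith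
      have hδ2neg : δ2 < 0 := by
        have := (abs_le.mp hea2).1
        rw [hδ2def]; linarith
      have k1 : 2*x1 - δ1 ≤ 0 := by
        by_contra hk; push_neg at hk
        have := mul_neg_of_neg_of_pos hδ1neg hk
        linarith
      have k2 : 2*(s - x1) - δ2 ≤ 0 := by
        by_contra hk; push_neg at hk
        have := mul_neg_of_neg_of_pos hδ2neg hk
        linarith
      have := (abs_le.mp hA1).1
      have := (abs_le.mp hea2).1
      rw [hδ1def] at k1
      rw [hδ2def] at k2
      linarith
  -- bound |x1|
  have hx1M : |x1| ≤ 2*A^2 + 2*A + B0 + 4 := by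
    by_cases hd : d = 0
    · have hδeq : δ1 = δ2 := by
        rw [hddef] at hd
        rw [hδ1def, hδ2def]; linarith
      have hx1A : |x1| ≤ A := by
        rcases lt_trichotomy δ1 0 with hneg | hzero | hpos
        · have k1 : 2*x1 - δ1 ≤ 0 := by
            by_contra hk; push_neg at hk
            have := mul_neg_of_neg_of_pos hneg hk
            linarith
          have k2 : 2*(s - x1) - δ2 ≤ 0 := by
            by_contra hk; push_neg at hk
            have := mul_neg_of_neg_of_pos (hδeq ▸ hneg) hk
            linarith
          have hx1neg : x1 < 0 := by linarith [hδeq]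
          have hx1ges : s ≤ x1 := by omega
          have : -|s| ≤ s := neg_abs_le s
          rw [abs_of_neg hx1neg]
          linarith
        · exact absurd hzero hd1
        · have k1 : 0 ≤ 2*x1 - δ1 := by
            by_contra hk; push_neg at hk
            have := mul_neg_of_pos_of_neg hpos hk
            linarith
          have k2 : 0 ≤ 2*(s - x1) - δ2 := by
            by_contra hk; push_neg at hk
            have := mul_neg_of_pos_of_neg (hδeq ▸ hpos) hk
            linarith
          have hx1pos : 0 < x1 := by linarith
          have hx1les : x1 ≤ s := by omega
          have : s ≤ |s| := le_abs_self s
          rw [abs_of_pos hx1pos]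
          linarith
      nlinarith [sq_nonneg A]
    · have hdge1 : 1 ≤ |d| := by
        have := abs_pos.mpr hd
        linarith
      have step1 : |x1| ≤ |d*x1| := by
        rw [abs_mul]
        nlinarith [mul_nonneg (show (0:ℤ) ≤ |d| - 1 by linarith) (abs_nonneg x1)]
      have hss : s*s ≤ A*A := by
        nlinarith [mul_self_le_mul_self (abs_nonneg s) hs, abs_mul_abs_self s]
      have hus : |(e*a2)*s| ≤ A*A := by
        rw [abs_mul]
        exact mul_le_mul hea2 hs (abs_nonneg s) hA0
      have step2 : |d*x1| ≤ 2*A^2 + 2*A + B0 + 4 := by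
        rw [key]
        rw [abs_le]
        constructor
        · have := (abs_le.mp hus).2
          have := (abs_le.mp hB).2
          have := (abs_le.mp hea3).2
          have := (abs_le.mp hea3).1
          nlinarith [sq_nonneg s]
        · have := (abs_le.mp hus).1
          have := (abs_le.mp hB).1
          have := (abs_le.mp hea3).1
          have := (abs_le.mp hea3).2
          nlinarith [sq_nonneg s]
      linarith
  have hx2M : |x2| ≤ A + (2*A^2 + 2*A + B0 + 4) := by
    have hex2 : |x2| = |s - x1| := by
      rw [hsdef, show x1 + e*x2 - x1 = e * x2 by ring, abs_mul, habse, one_mul]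
    rw [hex2, sub_eq_add_neg]
    calc |s + -x1| ≤ |s| + |-x1| := abs_add_le s (-x1)
      _ = |s| + |x1| := by rw [abs_neg]
      _ ≤ A + (2*A^2 + 2*A + B0 + 4) := by linarith
  rw [hx3abs]
  nlinarith [sq_nonneg A, sq_nonneg B0, mul_nonneg hA0 hB0]

lemma core_int (A B0 a1 a2 a3 b x1 x2 x3 : ℤ)
    (hA1 : |a1| ≤ A) (hA2 : |a2| ≤ A) (hA3 : |a3| ≤ A) (hB : |b| ≤ B0)
    (heq : x1^2 + x2^2 + x3^2 + x1*x2*x3 - a1*x1 - a2*x2 - a3*x3 - b = 0)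
    (h1 : |a1 - x2*x3 - x1| ≤ |x1|) (h2 : |a2 - x1*x3 - x2| ≤ |x2|)
    (hn1 : a1 - x2*x3 - x1 ≠ x1) (hn2 : a2 - x1*x3 - x2 ≠ x2) :
    |x1| + |x2| + |x3| ≤ 10*(A + B0 + 3)^2 := by
  have hA0 : 0 ≤ A := le_trans (abs_nonneg _) hA1
  have hB0 : 0 ≤ B0 := le_trans (abs_nonneg _) hB
  have e1 : |x2| * |x3| ≤ A + 2*|x1| := by
    rw [← abs_mul, abs_le]
    have n1b := abs_le.mp h1
    have a1b := abs_le.mp hA1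
    have u := le_abs_self x1
    have v := neg_abs_le x1
    constructor <;> [nlinarith [n1b.1, n1b.2, a1b.1, a1b.2]; nlinarith [n1b.1, n1b.2, a1b.1, a1b.2]]
  have e2 : |x1| * |x3| ≤ A + 2*|x2| := by
    rw [← abs_mul, abs_le]
    have n2b := abs_le.mp h2
    have a2b := abs_le.mp hA2
    have u := le_abs_self x2
    have v := neg_abs_le x2
    constructor <;> [nlinarith [n2b.1, n2b.2, a2b.1, a2b.2]; nlinarith [n2b.1, n2b.2, a2b.1, a2b.2]]
  by_cases h3big : 3 ≤ |x3|
  · have s1 : 3*|x2| ≤ A + 2*|x1| := by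
      nlinarith [mul_nonneg (show (0:ℤ) ≤ |x3| - 3 by linarith) (abs_nonneg x2)]
    have s2 : 3*|x1| ≤ A + 2*|x2| := by
      nlinarith [mul_nonneg (show (0:ℤ) ≤ |x3| - 3 by linarith) (abs_nonneg x1)]
    have s12 : |x1| + |x2| ≤ 2*A := by linarith
    have hsum0 : 0 ≤ |x1| + |x2| := by positivity
    have hprod : |x1| * |x2| ≤ A^2 := by
      nlinarith [sq_nonneg (|x1| - |x2|), mul_le_mul s12 s12 hsum0 (by linarith : (0:ℤ) ≤ 2*A)]
    have p1 : a1*x1 ≤ A*|x1| := mul_le_A x1 hA1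
    have p2 : a2*x2 ≤ A*|x2| := mul_le_A x2 hA2
    have p3 : a3*x3 ≤ A*|x3| := mul_le_A x3 hA3
    have pb : b ≤ B0 := le_trans (le_abs_self b) hB
    have pc : -(x1*x2*x3) ≤ A^2*|x3| := by
      have habs : |x1*x2*x3| ≤ A^2 * |x3| := by
        rw [abs_mul, abs_mul]
        exact mul_le_mul_of_nonneg_right hprod (abs_nonneg x3)
      linarith [neg_abs_le (x1*x2*x3)]
    have q12 : A*(|x1| + |x2|) ≤ A*(2*A) := mul_le_mul_of_nonneg_left s12 hA0
    have key3 : |x3|^2 ≤ (A^2+A)*|x3| + (2*A^2 + B0) := by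
      have hsq : |x3|^2 = x3^2 := sq_abs x3
      nlinarith [sq_nonneg x1, sq_nonneg x2]
    have b3 : |x3| ≤ (A^2+A) + (2*A^2+B0) :=
      quad_bound _ _ _ (abs_nonneg _) (by positivity) (by positivity) key3
    nlinarith [sq_nonneg A, sq_nonneg B0, mul_nonneg hA0 hB0]
  · by_cases h3sm : |x3| ≤ 1
    · have p1 : a1*x1 ≤ A*|x1| := mul_le_A x1 hA1
      have p2 : a2*x2 ≤ A*|x2| := mul_le_A x2 hA2
      have p3 : a3*x3 ≤ A*|x3| := mul_le_A x3 hA3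
      have pb : b ≤ B0 := le_trans (le_abs_self b) hB
      have p3' : A*|x3| ≤ A := by nlinarith
      have pc : -(x1*x2*x3) ≤ |x1| * |x2| := by
        have habs : |x1*x2*x3| ≤ |x1| * |x2| := by
          rw [abs_mul, abs_mul]
          exact mul_le_of_le_one_right (mul_nonneg (abs_nonneg _) (abs_nonneg _)) h3sm
        linarith [neg_abs_le (x1*x2*x3)]
      have keyS : (|x1| + |x2|)^2 ≤ (4*A)*(|x1| + |x2|) + 4*(A + B0) := by
        nlinarith [sq_abs x1, sq_abs x2, sq_nonneg (|x1| - |x2|), sq_nonneg x3]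
      have bS : |x1| + |x2| ≤ 4*A + 4*(A+B0) :=
        quad_bound _ _ _ (by positivity) (by positivity) (by positivity) keyS
      nlinarith [sq_nonneg A, sq_nonneg B0, mul_nonneg hA0 hB0]
    · have h2eq : |x3| = 2 := by omega
      rcases abs_eq (by norm_num : (0:ℤ) ≤ 2) |>.mp h2eq with h | h
      · exact core_int2 A B0 a1 a2 a3 b x1 x2 x3 1 hA1 hA2 hA3 hB (Or.inl rfl)
          (by omega) heq h1 h2 hn1 hn2
      · exact core_int2 A B0 a1 a2 a3 b x1 x2 x3 (-1) hA1 hA2 hA3 hB (Or.inr rfl)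
          (by omega) heq h1 h2 hn1 hn2

lemma l3_int (A B0 a1 a2 a3 b x1 x2 x3 : ℤ)
    (hA1 : |a1| ≤ A) (hA2 : |a2| ≤ A) (hA3 : |a3| ≤ A) (hB : |b| ≤ B0)
    (heq : x1^2 + x2^2 + x3^2 + x1*x2*x3 - a1*x1 - a2*x2 - a3*x3 - b = 0)
    (h1 : |a1 - x2*x3 - x1| = |x1|) :
    a1 - x2*x3 - x1 = x1 ∨ |x1| + |x2| + |x3| ≤ 10*(A + B0 + 3)^2 := by
  have hA0 : 0 ≤ A := le_trans (abs_nonneg _) hA1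
  have hB0 : 0 ≤ B0 := le_trans (abs_nonneg _) hB
  rcases abs_eq_abs.mp h1 with heq1 | heq1
  · exact Or.inl heq1
  right
  have ha : x2*x3 = a1 := by linarith
  by_cases hx2 : x2 = 0
  · subst hx2
    have ha1 : a1 = 0 := by linarith
    have heq' : x1^2 + x3^2 - a1*x1 - a3*x3 - b = 0 := by linear_combination heq
    have p1 : a1*x1 ≤ A*|x1| := mul_le_A x1 hA1
    have p3 : a3*x3 ≤ A*|x3| := mul_le_A x3 hA3
    have pb : b ≤ B0 := le_trans (le_abs_self b) hB
    have keyS : (|x1| + |x3|)^2 ≤ (2*A)*(|x1| + |x3|) + 2*B0 := by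
      nlinarith [sq_abs x1, sq_abs x3, sq_nonneg (|x1| - |x3|)]
    have bS : |x1| + |x3| ≤ 2*A + 2*B0 :=
      quad_bound _ _ _ (by positivity) (by positivity) (by positivity) keyS
    simp only [abs_zero]
    nlinarith [sq_nonneg A, sq_nonneg B0, mul_nonneg hA0 hB0]
  · by_cases hx3 : x3 = 0
    · subst hx3
      have ha1 : a1 = 0 := by linarith
      have heq' : x1^2 + x2^2 - a1*x1 - a2*x2 - b = 0 := by linear_combination heq
      have p1 : a1*x1 ≤ A*|x1| := mul_le_A x1 hA1
      have p2 : a2*x2 ≤ A*|x2| := mul_le_A x2 hA2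
      have pb : b ≤ B0 := le_trans (le_abs_self b) hB
      have keyS : (|x1| + |x2|)^2 ≤ (2*A)*(|x1| + |x2|) + 2*B0 := by
        nlinarith [sq_abs x1, sq_abs x2, sq_nonneg (|x1| - |x2|)]
      have bS : |x1| + |x2| ≤ 2*A + 2*B0 :=
        quad_bound _ _ _ (by positivity) (by positivity) (by positivity) keyS
      simp only [abs_zero]
      nlinarith [sq_nonneg A, sq_nonneg B0, mul_nonneg hA0 hB0]
    · have h2pos : 1 ≤ |x2| := by
        have := abs_pos.mpr hx2
        linarith
      have h3pos : 1 ≤ |x3| := by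
        have := abs_pos.mpr hx3
        linarith
      have hprod : |x2| * |x3| ≤ A := by
        rw [← abs_mul, ha]; exact hA1
      have h2A : |x2| ≤ A := by nlinarith
      have h3A : |x3| ≤ A := by nlinarith
      have p2 : a2*x2 ≤ A*|x2| := mul_le_A x2 hA2
      have p3 : a3*x3 ≤ A*|x3| := mul_le_A x3 hA3
      have pb : b ≤ B0 := le_trans (le_abs_self b) hB
      have hx1sq : x1^2 ≤ 2*A^2 + B0 := by
        have hcc : x1^2 = -(x2^2) - x3^2 + a2*x2 + a3*x3 + b := by
          linear_combination heq - x1 * ha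
        nlinarith [sq_nonneg x2, sq_nonneg x3, mul_le_mul h2A h2A (abs_nonneg x2) hA0,
          mul_le_mul h3A h3A (abs_nonneg x3) hA0, sq_abs x2, sq_abs x3]
      have hx1 : |x1| ≤ 2*A^2 + B0 + 1 := by
        rcases eq_or_ne x1 0 with rfl | hx1ne
        · simp; positivity
        · have h1pos : 1 ≤ |x1| := by
            have := abs_pos.mpr hx1ne
            linarith
          nlinarith [sq_abs x1, mul_le_mul_of_nonneg_left h1pos (abs_nonneg x1)]
      nlinarith [sq_nonneg A, sq_nonneg B0, mul_nonneg hA0 hB0]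

lemma delta_update (z : Fin 3 → ℤ) (i : Fin 3) (v : ℤ) :
    delta (Function.update z i v) = delta z - |z i| + |v| := by
  fin_cases i <;> simp [delta, Function.update] <;> ring

lemma vAct_eq_iff (α : Fin 3 → ℤ) (i : Fin 3) (z : Fin 3 → ℤ) :
    vAct α i z = z ↔ α i - z (i + 1) * z (i + 2) - z i = z i := by
  constructor
  · intro h
    have := congrFun h i
    simpa [vAct, Function.update] using this
  · intro h
    unfold vAct
    rw [h]
    exact Function.update_eq_self i z

lemma delta_vAct (α : Fin 3 → ℤ) (i : Fin 3) (z : Fin 3 → ℤ) :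
    delta (vAct α i z) = delta z - |z i| + |α i - z (i + 1) * z (i + 2) - z i| :=
  delta_update z i _

def Rbd (α : Fin 3 → ℤ) (β : ℤ) : ℤ := 10 * ((|α 0| ⊔ |α 1| ⊔ |α 2|) + |β| + 3)^2

lemma core (α : Fin 3 → ℤ) (β : ℤ) (z : Fin 3 → ℤ) (hz : onV α β z)
    (i j : Fin 3) (hij : i ≠ j)
    (hdi : delta (vAct α i z) ≤ delta z) (hdj : delta (vAct α j z) ≤ delta z)
    (hni : vAct α i z ≠ z) (hnj : vAct α j z ≠ z) :
    delta z ≤ Rbd α β := by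
  have hA1 : |α 0| ≤ |α 0| ⊔ |α 1| ⊔ |α 2| := le_sup_of_le_left le_sup_left
  have hA2 : |α 1| ≤ |α 0| ⊔ |α 1| ⊔ |α 2| := le_sup_of_le_left le_sup_right
  have hA3 : |α 2| ≤ |α 0| ⊔ |α 1| ⊔ |α 2| := le_sup_right
  have hB : |β| ≤ |β| := le_rfl
  have Hi : |α i - z (i + 1) * z (i + 2) - z i| ≤ |z i| := by
    rw [delta_vAct] at hdi; linarith
  have Hj : |α j - z (j + 1) * z (j + 2) - z j| ≤ |z j| := by
    rw [delta_vAct] at hdj; linarith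
  have Ni : α i - z (i + 1) * z (i + 2) - z i ≠ z i :=
    fun h => hni ((vAct_eq_iff α i z).mpr h)
  have Nj : α j - z (j + 1) * z (j + 2) - z j ≠ z j :=
    fun h => hnj ((vAct_eq_iff α j z).mpr h)
  unfold onV at hz
  unfold Rbd delta
  fin_cases i <;> fin_cases j <;> simp_all only [] <;>
    [ (exact absurd rfl hij);
      -- i=0, j=1, l=2
      (have := core_int _ _ (α 0) (α 1) (α 2) β (z 0) (z 1) (z 2) hA1 hA2 hA3 hB
        (by linear_combination hz)
        (by simpa using Hi)
        (by rw [show z 0 * z 2 = z 2 * z 0 from mul_comm _ _]; simpa using Hj)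
        (by simpa using Ni)
        (by rw [show z 0 * z 2 = z 2 * z 0 from mul_comm _ _]; simpa using Nj)
       linarith);
      -- i=0, j=2, l=1
      (have := core_int _ _ (α 0) (α 2) (α 1) β (z 0) (z 2) (z 1) hA1 hA3 hA2 hB
        (by linear_combination hz)
        (by rw [show z 2 * z 1 = z 1 * z 2 from mul_comm _ _]; simpa using Hi)
        (by simpa using Hj)
        (by rw [show z 2 * z 1 = z 1 * z 2 from mul_comm _ _]; simpa using Ni)
        (by simpa using Nj)
       linarith);
      -- i=1, j=0, l=2
      (have := core_int _ _ (α 1) (α 0) (α 2) β (z 1) (z 0) (z 2) hA2 hA1 hA3 hB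
        (by linear_combination hz)
        (by rw [show z 0 * z 2 = z 2 * z 0 from mul_comm _ _]; simpa using Hi)
        (by simpa using Hj)
        (by rw [show z 0 * z 2 = z 2 * z 0 from mul_comm _ _]; simpa using Ni)
        (by simpa using Nj)
       linarith);
      (exact absurd rfl hij);
      -- i=1, j=2, l=0
      (have := core_int _ _ (α 1) (α 2) (α 0) β (z 1) (z 2) (z 0) hA2 hA3 hA1 hB
        (by linear_combination hz)
        (by simpa using Hi)
        (by rw [show z 1 * z 0 = z 0 * z 1 from mul_comm _ _]; simpa using Hj)
        (by simpa using Ni)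
        (by rw [show z 1 * z 0 = z 0 * z 1 from mul_comm _ _]; simpa using Nj)
       linarith);
      -- i=2, j=0, l=1
      (have := core_int _ _ (α 2) (α 0) (α 1) β (z 2) (z 0) (z 1) hA3 hA1 hA2 hB
        (by linear_combination hz)
        (by simpa using Hi)
        (by rw [show z 2 * z 1 = z 1 * z 2 from mul_comm _ _]; simpa using Hj)
        (by simpa using Ni)
        (by rw [show z 2 * z 1 = z 1 * z 2 from mul_comm _ _]; simpa using Nj)
       linarith);
      -- i=2, j=1, l=0
      (have := core_int _ _ (α 2) (α 1) (α 0) β (z 2) (z 1) (z 0) hA3 hA2 hA1 hB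
        (by linear_combination hz)
        (by rw [show z 1 * z 0 = z 0 * z 1 from mul_comm _ _]; simpa using Hi)
        (by simpa using Hj)
        (by rw [show z 1 * z 0 = z 0 * z 1 from mul_comm _ _]; simpa using Ni)
        (by simpa using Nj)
       linarith);
      (exact absurd rfl hij)]

lemma lastfix (α : Fin 3 → ℤ) (β : ℤ) (z : Fin 3 → ℤ) (hz : onV α β z)
    (j : Fin 3) (hdj : delta (vAct α j z) ≤ delta z)
    (hlast : delta z ≤ delta (vAct α j z)) (hbig : Rbd α β < delta z) :
    vAct α j z = z := by
  have hA1 : |α 0| ≤ |α 0| ⊔ |α 1| ⊔ |α 2| := le_sup_of_le_left le_sup_left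
  have hA2 : |α 1| ≤ |α 0| ⊔ |α 1| ⊔ |α 2| := le_sup_of_le_left le_sup_right
  have hA3 : |α 2| ≤ |α 0| ⊔ |α 1| ⊔ |α 2| := le_sup_right
  have hB : |β| ≤ |β| := le_rfl
  have Hj : |α j - z (j + 1) * z (j + 2) - z j| = |z j| := by
    rw [delta_vAct] at hdj hlast; omega
  rw [vAct_eq_iff]
  unfold onV at hz
  unfold Rbd delta at hbig
  fin_cases j <;> simp_all only []
  · rcases l3_int _ _ (α 0) (α 1) (α 2) β (z 0) (z 1) (z 2) hA1 hA2 hA3 hB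
      (by linear_combination hz) (by simpa using Hj) with h | h
    · simpa using h
    · exfalso; linarith
  · rcases l3_int _ _ (α 1) (α 2) (α 0) β (z 1) (z 2) (z 0) hA2 hA3 hA1 hB
      (by linear_combination hz) (by simpa using Hj) with h | h
    · simpa using h
    · exfalso; linarith
  · rcases l3_int _ _ (α 2) (α 0) (α 1) β (z 2) (z 0) (z 1) hA3 hA1 hA2 hB
      (by linear_combination hz) (by simpa using Hj) with h | h
    · simpa using h
    · exfalso; linarith

lemma vAct_invol (α : Fin 3 → ℤ) (i : Fin 3) (z : Fin 3 → ℤ) :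
    vAct α i (vAct α i z) = z := by
  funext k
  fin_cases i <;> fin_cases k <;> simp [vAct, Function.update] <;> ring

lemma onV_vAct (α : Fin 3 → ℤ) (β : ℤ) (i : Fin 3) (z : Fin 3 → ℤ)
    (hz : onV α β z) : onV α β (vAct α i z) := by
  unfold onV at hz
  fin_cases i <;> simp [onV, vAct, Function.update] <;> linear_combination hz

lemma onV_foldl (α : Fin 3 → ℤ) (β : ℤ) (L : List (Fin 3)) (z : Fin 3 → ℤ)
    (hz : onV α β z) : onV α β (L.foldl (fun z i => vAct α i z) z) := by
  induction L generalizing z with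
  | nil => exact hz
  | cons i t ih => exact ih _ (onV_vAct α β i z hz)

lemma foldl_reverse_invol (α : Fin 3 → ℤ) (L : List (Fin 3)) (z : Fin 3 → ℤ) :
    (L.reverse).foldl (fun z i => vAct α i z) (L.foldl (fun z i => vAct α i z) z) = z := by
  induction L generalizing z with
  | nil => rfl
  | cons i t ih =>
      simp only [List.foldl_cons, List.reverse_cons, List.foldl_append, List.foldl_nil]
      rw [ih (vAct α i z), vAct_invol]

lemma gammaRel_symm {α : Fin 3 → ℤ} {x y : Fin 3 → ℤ} (h : gammaRel α x y) :
    gammaRel α y x := by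
  obtain ⟨L, rfl⟩ := h
  exact ⟨L.reverse, (foldl_reverse_invol α L x).symm⟩

lemma gammaRel_trans {α : Fin 3 → ℤ} {x y w : Fin 3 → ℤ} (h1 : gammaRel α x y)
    (h2 : gammaRel α y w) : gammaRel α x w := by
  obtain ⟨L1, rfl⟩ := h1
  obtain ⟨L2, rfl⟩ := h2
  exact ⟨L1 ++ L2, by rw [List.foldl_append]⟩

lemma unique_high (α : Fin 3 → ℤ) (β : ℤ) (p q : Fin 3 → ℤ)
    (hp : onV α β p)
    (hlp : ∀ i, delta p ≤ delta (vAct α i p)) (hlq : ∀ i, delta q ≤ delta (vAct α i q))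
    (hbp : Rbd α β < delta p) (hbq : Rbd α β < delta q)
    (hne : p ≠ q) (hrel : gammaRel α p q) : False := by
  classical
  set f : (Fin 3 → ℤ) → Fin 3 → (Fin 3 → ℤ) := fun z i => vAct α i z with hf
  set S : Set ℕ := {n | ∃ L : List (Fin 3), L.length = n ∧ q = L.foldl f p} with hSdef
  have hS : S.Nonempty := by
    obtain ⟨L, hL⟩ := hrel
    exact ⟨L.length, L, rfl, hL⟩
  obtain ⟨L, hLlen, hLq⟩ := Nat.sInf_mem hS
  have hmin : ∀ L' : List (Fin 3), q = L'.foldl f p → sInf S ≤ L'.length :=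
    fun L' h => Nat.sInf_le ⟨L', rfl, h⟩
  set n := sInf S with hn
  set y : ℕ → (Fin 3 → ℤ) := fun t => (L.take t).foldl f p with hy
  have hy0 : y 0 = p := by simp [hy]
  have hyn : y n = q := by
    simp only [hy]
    rw [← hLlen, List.take_length]
    exact hLq.symm
  have hstep : ∀ t, (ht : t < n) → y (t+1) = vAct α (L.get ⟨t, by rw [hLlen]; exact ht⟩) (y t) := by
    intro t ht
    have ht' : t < L.length := by rw [hLlen]; exact ht
    simp only [hy]
    rw [List.take_succ, List.getElem?_eq_getElem ht']
    simp only [Option.toList_some, List.foldl_append, List.foldl_cons, List.foldl_nil]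
    rfl
  have honV : ∀ t, onV α β (y t) := fun t => onV_foldl α β _ p hp
  have hinj : ∀ a b, a ≤ n → b ≤ n → y a = y b → a = b := by
    have key : ∀ a b, a < b → b ≤ n → y a = y b → False := by
      intro a b hab hbn heq
      have hq' : q = ((L.take a) ++ (L.drop b)).foldl f p := by
        rw [List.foldl_append]
        have h1 : (L.drop b).foldl f (y b) = q := by
          calc (L.drop b).foldl f (y b)
              = ((L.take b) ++ (L.drop b)).foldl f p := by
                rw [List.foldl_append]
            _ = L.foldl f p := by rw [List.take_append_drop]
            _ = q := hLq.symm
        rw [show (L.take a).foldl f p = y a from rfl, heq]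
        exact h1.symm
      have hlen := hmin _ hq'
      rw [List.length_append, List.length_take, List.length_drop, hLlen] at hlen
      omega
    intro a b han hbn heq
    rcases lt_trichotomy a b with h | h | h
    · exact absurd heq (fun he => key a b h hbn he)
    · exact h
    · exact absurd heq.symm (fun he => key b a h han he)
  have hn1 : 1 ≤ n := by
    by_contra hc
    push_neg at hc
    interval_cases n
    · exact hne (hy0 ▸ hyn ▸ rfl)
  obtain ⟨m, hm_mem, hmax⟩ :=
    Finset.exists_max_image (Finset.range (n+1)) (fun t => delta (y t)) ⟨0, by simp⟩
  have hm_le : m ≤ n := by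
    have := Finset.mem_range.mp hm_mem
    omega
  have hmax' : ∀ t, t ≤ n → delta (y t) ≤ delta (y m) :=
    fun t ht => hmax t (Finset.mem_range.mpr (by omega))
  by_cases hm_n : m = n
  · -- maximum at endpoint q
    obtain ⟨k, hk⟩ : ∃ k, n = k + 1 := ⟨n - 1, by omega⟩
    have hkn : k < n := by omega
    set j := L.get ⟨k, by rw [hLlen]; exact hkn⟩ with hj
    have h1 : y (k+1) = vAct α j (y k) := hstep k hkn
    have hyk : y k = vAct α j q := by
      rw [← hyn, hk, h1, vAct_invol]
    have hd : delta (vAct α j q) ≤ delta q := by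
      rw [← hyk, ← hyn, hk]
      have := hmax' k (by omega)
      rw [hm_n, hk] at this
      exact this
    have hfix := lastfix α β q (hyn ▸ honV n) j hd (hlq j) hbq
    have : y k = y (k+1) := by rw [hyk, hfix, ← hk, hyn]
    have := hinj k (k+1) (by omega) (by omega) this
    omega
  · by_cases hm_0 : m = 0
    · -- maximum at endpoint p
      set j := L.get ⟨0, by rw [hLlen]; omega⟩ with hj
      have h1 : y 1 = vAct α j p := by
        have := hstep 0 (by omega)
        rwa [hy0] at this
      have hd : delta (vAct α j p) ≤ delta p := by
        rw [← h1, ← hy0]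
        have := hmax' 1 (by omega)
        rwa [hm_0] at this
      have hfix := lastfix α β p hp j hd (hlp j) hbp
      have : y 1 = y 0 := by rw [h1, hfix, hy0]
      have := hinj 1 0 (by omega) (by omega) this
      omega
    · -- interior maximum
      obtain ⟨t, ht⟩ : ∃ t, m = t + 1 := ⟨m - 1, by omega⟩
      have hmn : m < n := by omega
      have htn : t < n := by omega
      set i := L.get ⟨t, by rw [hLlen]; exact htn⟩ with hi
      set j := L.get ⟨m, by rw [hLlen]; exact hmn⟩ with hj
      have h1 : y m = vAct α i (y t) := by rw [ht]; exact hstep t htn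
      have hprev : vAct α i (y m) = y t := by rw [h1, vAct_invol]
      have h2 : y (m+1) = vAct α j (y m) := hstep m hmn
      have hdi : delta (vAct α i (y m)) ≤ delta (y m) := by
        rw [hprev]; exact hmax' t (by omega)
      have hdj : delta (vAct α j (y m)) ≤ delta (y m) := by
        rw [← h2]; exact hmax' (m+1) (by omega)
      have hij : i ≠ j := by
        intro h
        have : y (m+1) = y t := by rw [h2, ← h, hprev]
        have := hinj (m+1) t (by omega) (by omega) this
        omega
      have hni : vAct α i (y m) ≠ y m := by
        rw [hprev]
        intro h
        have := hinj t m (by omega) (by omega) h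
        omega
      have hnj : vAct α j (y m) ≠ y m := by
        rw [← h2]
        intro h
        have := hinj (m+1) m (by omega) (by omega) h
        omega
      have hcore := core α β (y m) (honV m) i j hij hdi hdj hni hnj
      have : delta p ≤ delta (y m) := by
        rw [← hy0]; exact hmax' 0 (by omega)
      linarith

lemma abs_coord_le_delta (y : Fin 3 → ℤ) (i : Fin 3) : |y i| ≤ delta y := by
  fin_cases i <;> simp [delta] <;>
    linarith [abs_nonneg (y 0), abs_nonneg (y 1), abs_nonneg (y 2)]

lemma low_finite (α : Fin 3 → ℤ) (β : ℤ) (R : ℤ) :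
    {y : Fin 3 → ℤ | onV α β y ∧ delta y ≤ R}.Finite := by
  apply Set.Finite.subset (Set.Finite.pi (fun _ : Fin 3 => Set.finite_Icc (-R) R))
  intro y hy
  simp only [Set.mem_pi, Set.mem_univ, Set.mem_Icc, forall_true_left]
  intro i
  have h1 := abs_coord_le_delta y i
  have h2 := hy.2
  constructor
  · linarith [neg_abs_le (y i)]
  · linarith [le_abs_self (y i)]

/-- Every `Γ`-orbit contains only finitely many last vertices. -/
theorem orbit_last_vertices_finite (α : Fin 3 → ℤ) (β : ℤ) (x : Fin 3 → ℤ)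
    (hx : onV α β x) :
    {y | gammaRel α x y ∧
      ∀ i : Fin 3, delta y ≤ delta (vAct α i y)}.Finite := by
  classical
  set T := {y | gammaRel α x y ∧ ∀ i : Fin 3, delta y ≤ delta (vAct α i y)} with hT
  have hsub : T ⊆ {y | onV α β y ∧ delta y ≤ Rbd α β} ∪ {y ∈ T | Rbd α β < delta y} := by
    intro y hy
    rcases le_or_gt (delta y) (Rbd α β) with h | h
    · left
      refine ⟨?_, h⟩
      obtain ⟨L, rfl⟩ := hy.1
      exact onV_foldl α β L x hx
    · right; exact ⟨hy, h⟩
  have hsing : {y ∈ T | Rbd α β < delta y}.Subsingleton := by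
    rintro p ⟨⟨hp1, hp2⟩, hp3⟩ q ⟨⟨hq1, hq2⟩, hq3⟩
    by_contra hne
    have honp : onV α β p := by
      obtain ⟨L, rfl⟩ := hp1
      exact onV_foldl α β L x hx
    exact unique_high α β p q honp hp2 hq2 hp3 hq3 hne
      (gammaRel_trans (gammaRel_symm hp1) hq1)
  exact Set.Finite.subset ((low_finite α β (Rbd α β)).union hsing.finite) hsub
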